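/- Conditional version of identification (Corollary 1, no-covariate X but with a coarsening V of U): suppose V = f(U) for some function f, and the stochastic compliance class IV assumptions hold. Then for each value v with E[w(U)1{f(U)=v}] ≠ 0, (E[Y·D | Z=1, V=v] − E[Y·D | Z=0, V=v]) = E[Y(1)·w(U)·1{f(U)=v}] / P(V=v) whenever V is independent of Z; note this requires V to be a function of variables independent of Z. -/
import Mathlib


open Finset
open scoped Classical

/-- Probability of an event `A` under mass function `p` on a finite sample space. -/
noncomputable def prb {Ω : Type*} [Fintype Ω] (p : Ω → ℝ) (A : Ω → Prop) : ℝ :=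
  ∑ ω, if A ω then p ω else 0

/-- Expectation of a real random variable `X` under mass function `p`. -/
noncomputable def exv {Ω : Type*} [Fintype Ω] (p : Ω → ℝ) (X : Ω → ℝ) : ℝ :=
  ∑ ω, p ω * X ω

/-- Conditional probability `P(A | B)`. -/
noncomputable def cpr {Ω : Type*} [Fintype Ω] (p : Ω → ℝ) (A B : Ω → Prop) : ℝ :=
  prb p (fun ω => A ω ∧ B ω) / prb p B

/-- Conditional expectation `E[X | B]`. -/
noncomputable def cex {Ω : Type*} [Fintype Ω] (p : Ω → ℝ) (X : Ω → ℝ) (B : Ω → Prop) : ℝ :=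
  (∑ ω, if B ω then p ω * X ω else 0) / prb p B

/-- Auxiliary: restricted expectation `∑_{ω ∈ A} p ω * F ω`. -/
noncomputable def sif {Ω : Type*} [Fintype Ω] (p : Ω → ℝ) (F : Ω → ℝ) (A : Ω → Prop) : ℝ :=
  ∑ ω, if A ω then p ω * F ω else 0

section aux
variable {Ω : Type*} [Fintype Ω]

lemma prb_congr (p : Ω → ℝ) {A B : Ω → Prop} (h : ∀ ω, A ω ↔ B ω) :
    prb p A = prb p B := by
  unfold prb; exact Finset.sum_congr rfl fun ω _ => by simp [h ω]

lemma prb_mono (p : Ω → ℝ) (hp : ∀ ω, 0 ≤ p ω) {A B : Ω → Prop} (h : ∀ ω, A ω → B ω) :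
    prb p A ≤ prb p B := by
  unfold prb
  apply Finset.sum_le_sum
  intro ω _
  by_cases hA : A ω
  · simp [hA, h ω hA]
  · by_cases hB : B ω <;> simp [hA, hB, hp ω]

lemma cpr_mul (p : Ω → ℝ) (A B : Ω → Prop) (hB : prb p B ≠ 0) :
    cpr p A B * prb p B = prb p (fun ω => A ω ∧ B ω) := by
  unfold cpr; field_simp

lemma sif_congr (p : Ω → ℝ) {F G : Ω → ℝ} {A B : Ω → Prop} (hAB : ∀ ω, A ω ↔ B ω)
    (hFG : ∀ ω, B ω → F ω = G ω) :
    sif p F A = sif p G B := by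
  unfold sif
  refine Finset.sum_congr rfl fun ω _ => ?_
  by_cases hB : B ω
  · rw [if_pos ((hAB ω).2 hB), if_pos hB, hFG ω hB]
  · rw [if_neg (fun hA => hB ((hAB ω).1 hA)), if_neg hB]

lemma fiber_split {ι : Type*} [Fintype ι] (p : Ω → ℝ) (U : Ω → ι) (F : Ω → ℝ)
    (A : ι → Prop) (B : Ω → Prop) :
    sif p F (fun ω => A (U ω) ∧ B ω)
      = ∑ u, if A u then sif p F (fun ω => B ω ∧ U ω = u) else 0 := by
  simp only [sif]
  have key : ∀ u, (if A u then
        (∑ ω, @ite _ (B ω ∧ U ω = u) (Classical.propDecidable _) (p ω * F ω) 0) else 0)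
      = ∑ ω, if U ω = u then
        (@ite _ (A (U ω) ∧ B ω) (Classical.propDecidable _) (p ω * F ω) 0) else 0 := by
    intro u
    by_cases hA : A u
    · rw [if_pos hA]
      refine Finset.sum_congr rfl fun ω _ => ?_
      by_cases hU : U ω = u
      · simp [hU, hA, and_comm]
      · simp [hU]
    · rw [if_neg hA]
      symm
      refine Finset.sum_eq_zero fun ω _ => ?_
      by_cases hU : U ω = u <;> simp [hU, hA]
  rw [Finset.sum_congr rfl fun u _ => key u, Finset.sum_comm]
  refine Finset.sum_congr rfl fun ω _ => ?_
  simp [Finset.sum_ite_eq]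

lemma collapse (p Y1 Y0 : Ω → ℝ) (C : Ω → Prop) :
    ∑ y1 ∈ Finset.image Y1 univ, ∑ y0 ∈ Finset.image Y0 univ,
      y1 * prb p (fun ω => Y1 ω = y1 ∧ Y0 ω = y0 ∧ C ω)
    = sif p Y1 C := by
  unfold sif prb
  simp_rw [Finset.mul_sum]
  have h1 : ∀ y1 y0 (ω : Ω),
      (y1 * @ite _ (Y1 ω = y1 ∧ Y0 ω = y0 ∧ C ω) (Classical.propDecidable _) (p ω) 0)
      = if Y0 ω = y0 then (if Y1 ω = y1 then (if C ω then p ω * Y1 ω else 0) else 0) else 0 := by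
    intro y1 y0 ω
    by_cases hc : Y1 ω = y1 ∧ Y0 ω = y0 ∧ C ω
    · obtain ⟨a, b, c⟩ := hc
      subst a
      simp [b, c, mul_comm]
    · rw [if_neg hc, mul_zero]
      split_ifs <;> simp_all
  refine (Finset.sum_congr rfl fun y1 _ => Finset.sum_congr rfl fun y0 _ =>
    Finset.sum_congr rfl fun ω _ => h1 y1 y0 ω).trans ?_
  have step1 : ∀ y1 : ℝ, ∑ y0 ∈ Finset.image Y0 univ, ∑ ω : Ω,
      (if Y0 ω = y0 then (if Y1 ω = y1 then (if C ω then p ω * Y1 ω else 0) else 0) else 0)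
      = ∑ ω : Ω, ∑ y0 ∈ Finset.image Y0 univ,
      (if Y0 ω = y0 then (if Y1 ω = y1 then (if C ω then p ω * Y1 ω else 0) else 0) else 0) :=
    fun y1 => Finset.sum_comm
  simp_rw [step1]
  rw [Finset.sum_comm]
  refine Finset.sum_congr rfl fun ω _ => ?_
  simp [Finset.sum_ite_eq, Finset.mem_image]

lemma keyA (p Y1 Y0 D : Ω → ℝ) (B E : Ω → Prop) (q : ℝ)
    (hBpos : prb p B ≠ 0)
    (hD : ∀ ω, D ω = 0 ∨ D ω = 1)
    (hcind1 : ∀ y1 y0 : ℝ, cpr p (fun ω => Y1 ω = y1 ∧ Y0 ω = y0 ∧ D ω = 1) B =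
      cpr p (fun ω => Y1 ω = y1 ∧ Y0 ω = y0) B * cpr p (fun ω => D ω = 1) B)
    (hind1 : ∀ y1 y0 : ℝ, prb p (fun ω => (Y1 ω = y1 ∧ Y0 ω = y0) ∧ B ω) =
      prb p (fun ω => (Y1 ω = y1 ∧ Y0 ω = y0) ∧ E ω) * q) :
    sif p (fun ω => Y1 ω * D ω) B
      = sif p Y1 E * (q * cpr p (fun ω => D ω = 1) B) := by
  set c := cpr p (fun ω => D ω = 1) B with hc
  obtain ⟨C, hC⟩ : ∃ C : Ω → Prop, ∀ ω, C ω ↔ (D ω = 1 ∧ B ω) := ⟨_, fun ω => Iff.rfl⟩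
  have step0 : sif p (fun ω => Y1 ω * D ω) B = sif p Y1 C := by
    simp only [sif]
    refine Finset.sum_congr rfl fun ω _ => ?_
    rcases hD ω with h | h
    · have hn : ¬ C ω := by rw [hC ω, h]; norm_num
      rw [if_neg hn, h]
      by_cases hB : B ω <;> simp [hB]
    · have h1 : p ω * (Y1 ω * D ω) = p ω * Y1 ω := by rw [h]; ring
      by_cases hB : B ω
      · rw [if_pos hB, if_pos ((hC ω).2 ⟨h, hB⟩), h1]
      · rw [if_neg hB, if_neg (fun hx => hB ((hC ω).1 hx).2)]
  rw [step0, ← collapse p Y1 Y0 C, ← collapse p Y1 Y0 E]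
  rw [Finset.sum_mul]
  refine Finset.sum_congr rfl fun y1 _ => ?_
  rw [Finset.sum_mul]
  refine Finset.sum_congr rfl fun y0 _ => ?_
  have e1 : prb p (fun ω => Y1 ω = y1 ∧ Y0 ω = y0 ∧ C ω)
      = prb p (fun ω => (Y1 ω = y1 ∧ Y0 ω = y0 ∧ D ω = 1) ∧ B ω) :=
    prb_congr p (fun ω => by rw [hC ω]; tauto)
  have e2 : prb p (fun ω => (Y1 ω = y1 ∧ Y0 ω = y0 ∧ D ω = 1) ∧ B ω)
      = cpr p (fun ω => Y1 ω = y1 ∧ Y0 ω = y0 ∧ D ω = 1) B * prb p B :=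
    (cpr_mul p _ B hBpos).symm
  have e3 : cpr p (fun ω => Y1 ω = y1 ∧ Y0 ω = y0) B * prb p B
      = prb p (fun ω => (Y1 ω = y1 ∧ Y0 ω = y0) ∧ B ω) := cpr_mul p _ B hBpos
  have e4 : prb p (fun ω => Y1 ω = y1 ∧ Y0 ω = y0 ∧ E ω)
      = prb p (fun ω => (Y1 ω = y1 ∧ Y0 ω = y0) ∧ E ω) :=
    prb_congr p (fun ω => by tauto)
  calc y1 * prb p (fun ω => Y1 ω = y1 ∧ Y0 ω = y0 ∧ C ω)
      = y1 * (cpr p (fun ω => Y1 ω = y1 ∧ Y0 ω = y0 ∧ D ω = 1) B * prb p B) := by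
        rw [← e2, ← e1]
    _ = y1 * (cpr p (fun ω => Y1 ω = y1 ∧ Y0 ω = y0) B * prb p B * c) := by
        rw [hcind1 y1 y0]; ring
    _ = y1 * (prb p (fun ω => (Y1 ω = y1 ∧ Y0 ω = y0) ∧ E ω) * q * c) := by
        rw [e3, hind1 y1 y0]
    _ = y1 * prb p (fun ω => Y1 ω = y1 ∧ Y0 ω = y0 ∧ E ω) * (q * c) := by
        rw [e4]; ring
end aux

/-- conditional identification for a coarsening V = f(U) that is
independent of Z. -/
theorem stmt19 {Ω ι κ : Type*} [Fintype Ω] [Fintype ι] [Fintype κ]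
    (p : Ω → ℝ) (hp : ∀ ω, 0 ≤ p ω) (hpsum : ∑ ω, p ω = 1)
    (Z D Y Y1 Y0 : Ω → ℝ) (U : Ω → ι)
    (hZbin : ∀ ω, Z ω = 0 ∨ Z ω = 1) (hDbin : ∀ ω, D ω = 0 ∨ D ω = 1)
    (hYobs : ∀ ω, Y ω = D ω * Y1 ω + (1 - D ω) * Y0 ω)
    (hpos : ∀ (z : ℝ) (u : ι), (z = 0 ∨ z = 1) →
      0 < prb p (fun ω => Z ω = z ∧ U ω = u))
    (hindep : ∀ (y1 y0 : ℝ) (u : ι) (z : ℝ),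
      prb p (fun ω => Y1 ω = y1 ∧ Y0 ω = y0 ∧ U ω = u ∧ Z ω = z) =
        prb p (fun ω => Y1 ω = y1 ∧ Y0 ω = y0 ∧ U ω = u) * prb p (fun ω => Z ω = z))
    (hcind : ∀ (y1 y0 d z : ℝ) (u : ι),
      cpr p (fun ω => Y1 ω = y1 ∧ Y0 ω = y0 ∧ D ω = d) (fun ω => Z ω = z ∧ U ω = u) =
        cpr p (fun ω => Y1 ω = y1 ∧ Y0 ω = y0) (fun ω => Z ω = z ∧ U ω = u) *
          cpr p (fun ω => D ω = d) (fun ω => Z ω = z ∧ U ω = u))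
    (w : ι → ℝ)
    (hw : ∀ u, w u = cpr p (fun ω => D ω = 1) (fun ω => Z ω = 1 ∧ U ω = u) -
                    cpr p (fun ω => D ω = 1) (fun ω => Z ω = 0 ∧ U ω = u))
    (f : ι → κ)
    (hVindep : ∀ (v : κ) (z : ℝ),
      prb p (fun ω => f (U ω) = v ∧ Z ω = z) =
        prb p (fun ω => f (U ω) = v) * prb p (fun ω => Z ω = z)) :
    ∀ v : κ,
      exv p (fun ω => w (U ω) * (if f (U ω) = v then 1 else 0)) ≠ 0 →
      0 < prb p (fun ω => f (U ω) = v) →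
      cex p (fun ω => Y ω * D ω) (fun ω => Z ω = 1 ∧ f (U ω) = v) -
          cex p (fun ω => Y ω * D ω) (fun ω => Z ω = 0 ∧ f (U ω) = v) =
        exv p (fun ω => Y1 ω * w (U ω) * (if f (U ω) = v then 1 else 0)) /
          prb p (fun ω => f (U ω) = v) := by
  intro v _ hPv
  have hΩ : Nonempty Ω := by
    by_contra h
    rw [not_nonempty_iff] at h
    rw [Finset.univ_eq_empty, Finset.sum_empty] at hpsum
    exact zero_ne_one hpsum
  obtain ⟨ω0⟩ := hΩ
  have hzpos : ∀ z : ℝ, (z = 0 ∨ z = 1) → 0 < prb p (fun ω => Z ω = z) := fun z hz =>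
    lt_of_lt_of_le (hpos z (U ω0) hz) (prb_mono p hp fun ω h => h.1)
  -- the per-stratum conditional means
  have hcex : ∀ z : ℝ, (z = 0 ∨ z = 1) →
      cex p (fun ω => Y ω * D ω) (fun ω => Z ω = z ∧ f (U ω) = v)
      = (∑ u, if f u = v then sif p Y1 (fun ω => U ω = u) *
            cpr p (fun ω => D ω = 1) (fun ω => Z ω = z ∧ U ω = u) else 0) /
          prb p (fun ω => f (U ω) = v) := by
    intro z hz01
    have hqz : prb p (fun ω => Z ω = z) ≠ 0 := (hzpos z hz01).ne'
    have e1 : sif p (fun ω => Y ω * D ω) (fun ω => Z ω = z ∧ f (U ω) = v)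
        = sif p (fun ω => Y1 ω * D ω) (fun ω => f (U ω) = v ∧ Z ω = z) := by
      refine sif_congr p (fun ω => and_comm) (fun ω _ => ?_)
      rcases hDbin ω with h | h
      · rw [h]; ring
      · rw [hYobs ω, h]; ring
    have e2 := fiber_split p U (fun ω => Y1 ω * D ω) (fun u => f u = v) (fun ω => Z ω = z)
    have e3 : ∀ u : ι, sif p (fun ω => Y1 ω * D ω) (fun ω => Z ω = z ∧ U ω = u)
        = sif p Y1 (fun ω => U ω = u) * (prb p (fun ω => Z ω = z) *
            cpr p (fun ω => D ω = 1) (fun ω => Z ω = z ∧ U ω = u)) := by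
      intro u
      refine keyA p Y1 Y0 D (fun ω => Z ω = z ∧ U ω = u) (fun ω => U ω = u)
        (prb p (fun ω => Z ω = z)) (hpos z u hz01).ne' hDbin
        (fun y1 y0 => hcind y1 y0 1 z u) (fun y1 y0 => ?_)
      calc prb p (fun ω => (Y1 ω = y1 ∧ Y0 ω = y0) ∧ (Z ω = z ∧ U ω = u))
          = prb p (fun ω => Y1 ω = y1 ∧ Y0 ω = y0 ∧ U ω = u ∧ Z ω = z) :=
            prb_congr p (fun ω => by tauto)
        _ = prb p (fun ω => Y1 ω = y1 ∧ Y0 ω = y0 ∧ U ω = u) * prb p (fun ω => Z ω = z) :=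
            hindep y1 y0 u z
        _ = prb p (fun ω => (Y1 ω = y1 ∧ Y0 ω = y0) ∧ U ω = u) * prb p (fun ω => Z ω = z) := by
            rw [prb_congr p (fun ω => by tauto :
              ∀ ω, (Y1 ω = y1 ∧ Y0 ω = y0 ∧ U ω = u) ↔ ((Y1 ω = y1 ∧ Y0 ω = y0) ∧ U ω = u))]
    have e4 : sif p (fun ω => Y1 ω * D ω) (fun ω => f (U ω) = v ∧ Z ω = z)
        = (∑ u, if f u = v then sif p Y1 (fun ω => U ω = u) *
            cpr p (fun ω => D ω = 1) (fun ω => Z ω = z ∧ U ω = u) else 0) *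
            prb p (fun ω => Z ω = z) := by
      rw [e2, Finset.sum_mul]
      refine Finset.sum_congr rfl fun u _ => ?_
      by_cases h : f u = v
      · rw [if_pos h, if_pos h, e3 u]; ring
      · rw [if_neg h, if_neg h, zero_mul]
    have hden : prb p (fun ω => Z ω = z ∧ f (U ω) = v)
        = prb p (fun ω => f (U ω) = v) * prb p (fun ω => Z ω = z) :=
      (prb_congr p (fun ω => and_comm)).trans (hVindep v z)
    show sif p (fun ω => Y ω * D ω) (fun ω => Z ω = z ∧ f (U ω) = v) /
        prb p (fun ω => Z ω = z ∧ f (U ω) = v) = _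
    rw [e1, e4, hden, mul_div_mul_right _ _ hqz]
  rw [hcex 1 (Or.inr rfl), hcex 0 (Or.inl rfl), div_sub_div_same]
  have hr : exv p (fun ω => Y1 ω * w (U ω) * (if f (U ω) = v then 1 else 0))
      = ∑ u, if f u = v then sif p Y1 (fun ω => U ω = u) * w u else 0 := by
    have r1 := fiber_split p U (fun ω => Y1 ω * w (U ω)) (fun u => f u = v) (fun _ => True)
    have r0 : exv p (fun ω => Y1 ω * w (U ω) * (if f (U ω) = v then 1 else 0))
        = sif p (fun ω => Y1 ω * w (U ω)) (fun ω => f (U ω) = v ∧ True) := by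
      simp only [exv, sif]
      refine Finset.sum_congr rfl fun ω _ => ?_
      by_cases h : f (U ω) = v <;> simp [h]
    rw [r0, r1]
    refine Finset.sum_congr rfl fun u _ => ?_
    by_cases h : f u = v
    · rw [if_pos h, if_pos h]
      simp only [sif]
      rw [Finset.sum_mul]
      refine Finset.sum_congr rfl fun ω _ => ?_
      by_cases hU : U ω = u
      · simp [hU]; ring
      · simp [hU]
    · rw [if_neg h, if_neg h]
  rw [hr, ← Finset.sum_sub_distrib]
  congr 1
  refine Finset.sum_congr rfl fun u _ => ?_
  by_cases h : f u = v
  · rw [if_pos h, if_pos h, if_pos h, hw u]; ring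
  · rw [if_neg h, if_neg h, if_neg h, sub_zero]
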